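/- arXiv:1907.11090 — 2 statements merged into one kernel-verified Lean document; each statement's English description precedes it below -/
import Mathlib

section
/- (Combined-rules lemma, part (i)) In an info-causal DAG with disjoint node sets B, C₁, C₂, D, if B is d-separated from C₁ given D in the info-intervention graph G^{σ(x̃_{C₂})}, then P(x_B | σ(x̃_{C₁}), σ(x̃_{C₂}), x_D) = P(x_B | σ(x̃_{C₂}), x_D). -/
open Finset

/-- The info-intervention distribution `P(x | σ(x̃_A)) = ∏_{k∈V} P(x_k | x*_{pa(k)})`,
where the kernel `q v a x` stands for `P(x_v = a | x_{pa(v)})` (depending only on the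
parent coordinates of `x`), and `x*_j = x̃_j` if `j ∈ A`, else `x_j`. -/
noncomputable def infoDist {V Ω : Type*} [Fintype V] [DecidableEq V]
    (q : V → Ω → (V → Ω) → ℝ) (A : Finset V) (xt : V → Ω) (x : V → Ω) : ℝ :=
  ∏ v : V, q v (x v) (fun j => if j ∈ A then xt j else x j)

/-- Marginal of a (discrete) distribution `p` on the coordinates in `S`, evaluated at `y`. -/
noncomputable def Marg {V Ω : Type*} [Fintype V] [DecidableEq V] [Fintype Ω] [DecidableEq Ω]
    (p : (V → Ω) → ℝ) (S : Finset V) (y : V → Ω) : ℝ :=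
  ∑ x : V → Ω, if ∀ i ∈ S, x i = y i then p x else 0

/-- `b` is a collider on a path segment `a — b — c` for edge relation `E`:
both edges point into `b`. -/
def IsCollider {V : Type*} (E : V → V → Prop) (a b c : V) : Prop := E a b ∧ E c b

/-- The walk `f` (a sequence of vertices, consecutive ones adjacent in either direction)
is blocked at internal position `i` by the conditioning set `Z`: either `f i` is a
non-collider lying in `Z`, or `f i` is a collider such that neither it nor any of its
descendants lies in `Z`. -/
def BlockedAt {V : Type*} (E : V → V → Prop) (Z : Set V) (f : ℕ → V) (i : ℕ) : Prop :=
  (¬ IsCollider E (f (i - 1)) (f i) (f (i + 1)) ∧ f i ∈ Z) ∨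
  (IsCollider E (f (i - 1)) (f i) (f (i + 1)) ∧ f i ∉ Z ∧
    ∀ z ∈ Z, ¬ Relation.TransGen E (f i) z)

/-- d-separation: every walk from `B` to `C` (consecutive vertices adjacent in `E` in
either direction) is blocked by `Z` at some internal position. -/
def dSep {V : Type*} (E : V → V → Prop) (B C Z : Set V) : Prop :=
  ∀ (n : ℕ) (f : ℕ → V), f 0 ∈ B → f n ∈ C →
    (∀ i < n, E (f i) (f (i + 1)) ∨ E (f (i + 1)) (f i)) →
    ∃ i, 0 < i ∧ i < n ∧ BlockedAt E Z f i

/-- Conditional independence of the coordinate sets `S` and `T` given `W` under the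
(discrete) distribution `p`: `P(x_S, x_T, x_W) P(x_W) = P(x_S, x_W) P(x_T, x_W)`. -/
noncomputable def CondIndep {V Ω : Type*} [Fintype V] [DecidableEq V] [Fintype Ω]
    [DecidableEq Ω] (p : (V → Ω) → ℝ) (S T W : Finset V) : Prop :=
  ∀ y : V → Ω, Marg p (S ∪ T ∪ W) y * Marg p W y = Marg p (S ∪ W) y * Marg p (T ∪ W) y

lemma marg_congr {V Ω : Type*} [Fintype V] [DecidableEq V] [Fintype Ω] [DecidableEq Ω]
    (p : (V → Ω) → ℝ) (S : Finset V) {y y' : V → Ω} (h : ∀ i ∈ S, y i = y' i) :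
    Marg p S y = Marg p S y' := by
  unfold Marg
  refine Finset.sum_congr rfl fun x _ => ?_
  refine if_congr ⟨fun hx i hi => (hx i hi).trans (h i hi),
    fun hx i hi => (hx i hi).trans (h i hi).symm⟩ rfl rfl

lemma marg_slice {V Ω : Type*} [Fintype V] [DecidableEq V] [Fintype Ω] [DecidableEq Ω]
    (q : V → Ω → (V → Ω) → ℝ) (C₁ C₂ : Finset V) (xt : V → Ω) (S : Finset V)
    (hC₁S : C₁ ⊆ S) (z : V → Ω) (hz : ∀ i ∈ C₁, z i = xt i) :
    Marg (infoDist q (C₁ ∪ C₂) xt) S z = Marg (infoDist q C₂ xt) S z := by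
  unfold Marg
  refine Finset.sum_congr rfl fun x _ => ?_
  by_cases hx : ∀ i ∈ S, x i = z i
  · rw [if_pos hx, if_pos hx]
    unfold infoDist
    refine Finset.prod_congr rfl fun v _ => ?_
    congr 1
    funext j
    by_cases h2 : j ∈ C₂
    · simp [h2, Finset.mem_union]
    by_cases h1 : j ∈ C₁
    · simp [h1, h2, Finset.mem_union, (hx j (hC₁S h1)).trans (hz j h1)]
    · simp [h1, h2, Finset.mem_union]
  · rw [if_neg hx, if_neg hx]

lemma dSep_mono {V : Type*} (E E' : V → V → Prop) (hsub : ∀ u v, E' u v → E u v)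
    (h2 : ∀ u v, E u v → ¬ E v u) (B C Z : Set V) (h : dSep E B C Z) :
    dSep E' B C Z := by
  intro n f hB hC hw
  obtain ⟨i, hi0, hin, hb⟩ := h n f hB hC (fun i hi => (hw i hi).imp (hsub _ _) (hsub _ _))
  refine ⟨i, hi0, hin, ?_⟩
  rcases hb with ⟨hnc, hz⟩ | ⟨hc, hz, hdesc⟩
  · exact Or.inl ⟨fun hc' => hnc ⟨hsub _ _ hc'.1, hsub _ _ hc'.2⟩, hz⟩
  · refine Or.inr ⟨⟨?_, ?_⟩, hz, fun w hw' ht => hdesc w hw' (Relation.TransGen.mono hsub _ _ ht)⟩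
    · have hedge := hw (i - 1) (by omega)
      rw [show i - 1 + 1 = i from by omega] at hedge
      rcases hedge with h1 | h1
      · exact h1
      · exact absurd (hsub _ _ h1) (h2 _ _ hc.1)
    · rcases hw i hin with h1 | h1
      · exact absurd (hsub _ _ h1) (h2 _ _ hc.2)
      · exact h1

/-- Combined-rules lemma, part (i). For disjoint node sets `B, C₁, C₂, D`,
if `B` is d-separated from `C₁` given `D` in the info-intervention graph `G^{σ(x̃_{C₂})}`
(edges out of `C₂` removed), then
`P(x_B | σ(x̃_{C₁}), σ(x̃_{C₂}), x_D) = P(x_B | σ(x̃_{C₂}), x_D)`, where the composed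
intervention on the disjoint sets is `σ(x̃_{C₁ ∪ C₂})`. The global Markov property for
info-intervention distributions is assumed, as allowed. -/
theorem info_combined_rules_i {V Ω : Type*} [Fintype V] [DecidableEq V]
    [Fintype Ω] [DecidableEq Ω]
    (pa : V → Finset V) (q : V → Ω → (V → Ω) → ℝ) (P : (V → Ω) → ℝ)
    (hloc : ∀ v a (x y : V → Ω), (∀ j ∈ pa v, x j = y j) → q v a x = q v a y)
    (hq0 : ∀ v a x, 0 ≤ q v a x) (hnorm : ∀ v x, ∑ a : Ω, q v a x = 1)
    (hfact : ∀ x, P x = ∏ v : V, q v (x v) x)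
    (hacyc : ∀ v, ¬ Relation.TransGen (fun u w : V => u ∈ pa w) v v)
    (B C₁ C₂ D : Finset V)
    (hBC₁ : Disjoint B C₁) (hBC₂ : Disjoint B C₂) (hBD : Disjoint B D)
    (hC₁C₂ : Disjoint C₁ C₂) (hC₁D : Disjoint C₁ D) (hC₂D : Disjoint C₂ D)
    (xt : V → Ω)
    (hMarkov : ∀ (A' : Finset V) (S T W : Finset V),
      dSep (fun u v => u ∈ pa v ∧ u ∉ A') (S : Set V) (T : Set V) (W : Set V) →
        CondIndep (infoDist q A' xt) S T W)
    (hd : dSep (fun u v => u ∈ pa v ∧ u ∉ C₂) (B : Set V) (C₁ : Set V) (D : Set V))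
    (y : V → Ω)
    (hpos1 : Marg (infoDist q (C₁ ∪ C₂) xt) D y ≠ 0)
    (hpos2 : Marg (infoDist q C₂ xt) D y ≠ 0)
    (hpos3 : Marg (infoDist q C₂ xt) (C₁ ∪ D) (fun j => if j ∈ C₁ then xt j else y j) ≠ 0) :
    Marg (infoDist q (C₁ ∪ C₂) xt) (B ∪ D) y / Marg (infoDist q (C₁ ∪ C₂) xt) D y
      = Marg (infoDist q C₂ xt) (B ∪ D) y / Marg (infoDist q C₂ xt) D y := by
  
  set p₁ := infoDist q (C₁ ∪ C₂) xt with hp₁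
  set p₂ := infoDist q C₂ xt with hp₂
  set z : V → Ω := fun j => if j ∈ C₁ then xt j else y j with hzdef
  have hzC₁ : ∀ i ∈ C₁, z i = xt i := fun i hi => by simp [hzdef, hi]
  have h2cyc : ∀ u v : V, (u ∈ pa v ∧ u ∉ C₂) → ¬ (v ∈ pa u ∧ v ∉ C₂) := by
    intro u v h h'
    exact hacyc u (Relation.TransGen.head h.1 (Relation.TransGen.single h'.1))
  have hd' : dSep (fun u v => u ∈ pa v ∧ u ∉ (C₁ ∪ C₂)) (B : Set V) (C₁ : Set V) (D : Set V) := by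
    refine dSep_mono _ _ ?_ h2cyc _ _ _ hd
    exact fun u v h => ⟨h.1, fun hc => h.2 (Finset.mem_union_right _ hc)⟩
  have hCI₁ := hMarkov (C₁ ∪ C₂) B C₁ D hd' z
  have hCI₂ := hMarkov C₂ B C₁ D hd z
  have hnotC₁D : ∀ i ∈ D, z i = y i := fun i hi => by
    simp [hzdef, Finset.disjoint_right.mp hC₁D hi]
  have hnotC₁BD : ∀ i ∈ B ∪ D, z i = y i := by
    intro i hi
    rcases Finset.mem_union.mp hi with hi | hi
    · simp [hzdef, Finset.disjoint_left.mp hBC₁ hi]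
    · exact hnotC₁D i hi
  have e1 : Marg p₁ D z = Marg p₁ D y := marg_congr _ _ hnotC₁D
  have e2 : Marg p₁ (B ∪ D) z = Marg p₁ (B ∪ D) y := marg_congr _ _ hnotC₁BD
  have e3 : Marg p₂ D z = Marg p₂ D y := marg_congr _ _ hnotC₁D
  have e4 : Marg p₂ (B ∪ D) z = Marg p₂ (B ∪ D) y := marg_congr _ _ hnotC₁BD
  have s1 : Marg p₁ (B ∪ C₁ ∪ D) z = Marg p₂ (B ∪ C₁ ∪ D) z :=
    marg_slice q C₁ C₂ xt _ (Finset.subset_union_right.trans Finset.subset_union_left) z hzC₁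
  have s2 : Marg p₁ (C₁ ∪ D) z = Marg p₂ (C₁ ∪ D) z :=
    marg_slice q C₁ C₂ xt _ Finset.subset_union_left z hzC₁
  rw [e1, e2, s1, s2] at hCI₁
  rw [← hp₂] at hCI₂
  rw [e3, e4] at hCI₂
  rw [div_eq_div_iff hpos1 hpos2]
  have hkey : (Marg p₁ (B ∪ D) y * Marg p₂ D y - Marg p₂ (B ∪ D) y * Marg p₁ D y)
      * Marg p₂ (C₁ ∪ D) z = 0 := by
    linear_combination Marg p₁ D y * hCI₂ - Marg p₂ D y * hCI₁
  have := (mul_eq_zero.mp hkey).resolve_right hpos3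
  linarith
end

section
/- (Generalized front-door with information function) Consider the front-door DAG D → A, D → B, A → C, C → B and a generalized info intervention that replaces the input of C by e_{AC} = g(x_A) for a given function g. Then P(x_B | σ(F)) = Σ_{x_C} Σ_{x_A} P(x_C | g(x_A)) P(x_B | x_C, x_A) P(x_A). -/
/-!
The observational joint identifies the two mechanisms the intervention keeps: dividing out
`P(x_A)` gives back `P(x_C | x_A)`, and since `C ⫫ D | A` the product `P(x_B | x_C, x_A) P(x_A)`
equals `Σ_{x_D} P(x_D) P(x_A | x_D) P(x_B | x_C, x_D)`. Substituting both into the right-hand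
side, term by term in `(x_C, x_A)`, yields the marginal of the intervened factorization.
-/

open Finset

/-- Joint distribution of the front-door DAG `D → A`, `D → B`, `A → C`, `C → B`:
`P(a,b,c,d) = P(d) P(a|d) P(c|a) P(b|c,d)`. -/
noncomputable def frontJoint {α β γ δ : Type*} (pD : δ → ℝ) (pA : δ → α → ℝ)
    (pC : α → γ → ℝ) (pB : γ → δ → β → ℝ) (a : α) (b : β) (c : γ) (d : δ) : ℝ :=
  pD d * pA d a * pC a c * pB c d b

section FrontJoint

variable {α β γ δ : Type*} (pD : δ → ℝ) (pA : δ → α → ℝ) (pC : α → γ → ℝ)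
  (pB : γ → δ → β → ℝ)

theorem sum_frontJoint_D [Fintype δ] (a : α) (b : β) (c : γ) :
    ∑ d, frontJoint pD pA pC pB a b c d = pC a c * ∑ d, pD d * pA d a * pB c d b := by
  rw [mul_sum]
  exact sum_congr rfl fun d _ => by simp only [frontJoint]; ring

theorem sum_frontJoint_BD [Fintype β] [Fintype δ] (hpB1 : ∀ c d, ∑ b, pB c d b = 1)
    (a : α) (c : γ) :
    ∑ b, ∑ d, frontJoint pD pA pC pB a b c d = pC a c * ∑ d, pD d * pA d a := by
  simp only [sum_frontJoint_D, ← mul_sum]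
  rw [sum_comm]
  simp only [← mul_sum, hpB1, mul_one]

theorem sum_frontJoint_BCD [Fintype β] [Fintype γ] [Fintype δ]
    (hpC1 : ∀ a, ∑ c, pC a c = 1) (hpB1 : ∀ c d, ∑ b, pB c d b = 1) (a : α) :
    ∑ b, ∑ c, ∑ d, frontJoint pD pA pC pB a b c d = ∑ d, pD d * pA d a := by
  rw [sum_comm]
  simp only [sum_frontJoint_BD pD pA pC pB hpB1, ← sum_mul, hpC1, one_mul]

theorem frontJoint_cond_C_given_A [Fintype β] [Fintype γ] [Fintype δ]
    (hpC1 : ∀ a, ∑ c, pC a c = 1) (hpB1 : ∀ c d, ∑ b, pB c d b = 1) (a : α) (c : γ)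
    (hA : ∑ b, ∑ c, ∑ d, frontJoint pD pA pC pB a b c d ≠ 0) :
    (∑ b, ∑ d, frontJoint pD pA pC pB a b c d)
        / (∑ b, ∑ c, ∑ d, frontJoint pD pA pC pB a b c d) = pC a c := by
  rw [sum_frontJoint_BCD pD pA pC pB hpC1 hpB1] at hA ⊢
  rw [sum_frontJoint_BD pD pA pC pB hpB1, mul_div_cancel_right₀ _ hA]

theorem frontJoint_cond_B_given_AC_mul_marginal_A [Fintype β] [Fintype γ] [Fintype δ]
    (hpC1 : ∀ a, ∑ c, pC a c = 1) (hpB1 : ∀ c d, ∑ b, pB c d b = 1) (a : α) (b : β) (c : γ)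
    (hAC : ∑ b, ∑ d, frontJoint pD pA pC pB a b c d ≠ 0) :
    (∑ d, frontJoint pD pA pC pB a b c d) / (∑ b, ∑ d, frontJoint pD pA pC pB a b c d)
        * (∑ b, ∑ c, ∑ d, frontJoint pD pA pC pB a b c d)
      = ∑ d, pD d * pA d a * pB c d b := by
  rw [sum_frontJoint_BD pD pA pC pB hpB1] at hAC ⊢
  rw [sum_frontJoint_D, sum_frontJoint_BCD pD pA pC pB hpC1 hpB1,
    mul_div_mul_left _ _ (left_ne_zero_of_mul hAC), div_mul_cancel₀ _ (right_ne_zero_of_mul hAC)]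

end FrontJoint

theorem generalized_front_door_general {α β γ δ : Type*} [Fintype α] [Fintype β] [Fintype γ]
    [Fintype δ]
    (pD : δ → ℝ) (pA : δ → α → ℝ) (pC : α → γ → ℝ) (pB : γ → δ → β → ℝ) (g : α → α)
    (hpC1 : ∀ a, ∑ c, pC a c = 1) (hpB1 : ∀ c d, ∑ b, pB c d b = 1)
    (xb : β)
    (hposA : ∀ a, 0 < ∑ b, ∑ c, ∑ d, frontJoint pD pA pC pB a b c d)    -- P(x_A) > 0
    (hposAC : ∀ a c, 0 < ∑ b, ∑ d, frontJoint pD pA pC pB a b c d) :    -- P(x_A,x_C) > 0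
    -- P(x_B | σ(F))  (marginal of the generalized info-intervention distribution)
    (∑ a, ∑ c, ∑ d, pD d * pA d a * pC (g a) c * pB c d xb)
      = ∑ c, ∑ a,
          ((∑ b, ∑ d, frontJoint pD pA pC pB (g a) b c d)
            / (∑ b, ∑ c, ∑ d, frontJoint pD pA pC pB (g a) b c d))      -- P(x_C | g(x_A))
          * ((∑ d, frontJoint pD pA pC pB a xb c d)
              / (∑ b, ∑ d, frontJoint pD pA pC pB a b c d))             -- P(x_B | x_C,x_A)
          * (∑ b, ∑ c, ∑ d, frontJoint pD pA pC pB a b c d)             -- P(x_A)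
      := by
  rw [sum_comm]
  refine sum_congr rfl fun c _ => sum_congr rfl fun a _ => ?_
  rw [mul_assoc,
    frontJoint_cond_C_given_A pD pA pC pB hpC1 hpB1 (g a) c (hposA (g a)).ne',
    frontJoint_cond_B_given_AC_mul_marginal_A pD pA pC pB hpC1 hpB1 a xb c (hposAC a c).ne',
    mul_sum]
  exact sum_congr rfl fun d _ => by ring

/-- Generalized front-door with information function. In the front-door
DAG `D → A, D → B, A → C, C → B`, for the generalized info intervention replacing the
input of `C` by `e_{AC} = g(x_A)`, the intervention distribution
`P(x | σ(F)) = P(x_D) P(x_A|x_D) P(x_C | g(x_A)) P(x_B | x_C, x_D)` satisfies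
`P(x_B | σ(F)) = Σ_{x_C} Σ_{x_A} P(x_C | g(x_A)) P(x_B | x_C, x_A) P(x_A)`, where the
right-hand conditionals and marginals are ratios/sums of the observational joint. -/
theorem generalized_front_door {α β γ δ : Type*} [Fintype α] [Fintype β] [Fintype γ]
    [Fintype δ]
    (pD : δ → ℝ) (pA : δ → α → ℝ) (pC : α → γ → ℝ) (pB : γ → δ → β → ℝ) (g : α → α)
    (hpD0 : ∀ d, 0 ≤ pD d) (hpA0 : ∀ d a, 0 ≤ pA d a)
    (hpC0 : ∀ a c, 0 ≤ pC a c) (hpB0 : ∀ c d b, 0 ≤ pB c d b)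
    (hpD1 : ∑ d, pD d = 1) (hpA1 : ∀ d, ∑ a, pA d a = 1)
    (hpC1 : ∀ a, ∑ c, pC a c = 1) (hpB1 : ∀ c d, ∑ b, pB c d b = 1)
    (xb : β)
    (hposA : ∀ a, 0 < ∑ b, ∑ c, ∑ d, frontJoint pD pA pC pB a b c d)    -- P(x_A) > 0
    (hposAC : ∀ a c, 0 < ∑ b, ∑ d, frontJoint pD pA pC pB a b c d) :    -- P(x_A,x_C) > 0
    -- P(x_B | σ(F))  (marginal of the generalized info-intervention distribution)
    (∑ a, ∑ c, ∑ d, pD d * pA d a * pC (g a) c * pB c d xb)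
      = ∑ c, ∑ a,
          ((∑ b, ∑ d, frontJoint pD pA pC pB (g a) b c d)
            / (∑ b, ∑ c, ∑ d, frontJoint pD pA pC pB (g a) b c d))      -- P(x_C | g(x_A))
          * ((∑ d, frontJoint pD pA pC pB a xb c d)
              / (∑ b, ∑ d, frontJoint pD pA pC pB a b c d))             -- P(x_B | x_C,x_A)
          * (∑ b, ∑ c, ∑ d, frontJoint pD pA pC pB a b c d)             -- P(x_A)
    :=
  generalized_front_door_general pD pA pC pB g hpC1 hpB1 xb hposA hposAC
end
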